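/- Let w be a modular cone metric on X, e ∈ int P, and let W^e_λ(x,y) = ξ_e(w_{λe}(x,y)). Then a sequence {xₙ} in X is modular cone Cauchy if and only if for every λ > 0, W^e_λ(xₙ, xₘ) → 0 as n, m → ∞. -/

import Mathlib

/-!
Since `e` is interior, every `c ≫ θ` dominates some `δ • e` with `δ > 0`, and `w_c` is antitone
in `c`. So both conditions say that `w_{δe}(xₙ, xₘ) ⪯ δ • e` eventually, for every `δ > 0`: on the
scalarized side because `ξ_e(v) < δ` implies `v ⪯ δ • e`, which implies `ξ_e(v) ≤ δ`, and because
`ξ_e ≥ 0` on the values of `w`, which lie in `P`. That lower bound fails only when `-e ∈ P`, but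
then `P` is the whole space and both conditions hold trivially.
-/

open Filter Topology Set

theorem exists_pos_add_smul_mem {E : Type*} [AddCommGroup E] [Module ℝ E] [TopologicalSpace E]
    [ContinuousAdd E] [ContinuousSMul ℝ E] {U : Set E} {a : E} (hU : U ∈ 𝓝 a) (v : E) :
    ∃ t : ℝ, 0 < t ∧ a + t • v ∈ U := by
  have hcont : Continuous fun t : ℝ => a + t • v := by fun_prop
  have hlim : Tendsto (fun t : ℝ => a + t • v) (𝓝[>] 0) (𝓝 a) :=
    (hcont.tendsto' 0 a (by simp)).mono_left nhdsWithin_le_nhds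
  obtain ⟨t, htU, ht⟩ := ((hlim.eventually hU).and self_mem_nhdsWithin).exists
  exact ⟨t, ht, htU⟩

namespace PointedCone

open scoped Pointwise

variable {E : Type*} [AddCommGroup E] [Module ℝ E] {K : PointedCone ℝ E} {e v : E}

/-- The nonlinear scalarization `ξ_e(v) = inf {r | v ⪯ r • e}`. -/
noncomputable def scalarization (K : PointedCone ℝ E) (e v : E) : ℝ :=
  sInf {r : ℝ | r • e - v ∈ K}

theorem smul_sub_mem_of_le (he : e ∈ K) {r s : ℝ} (hr : r • e - v ∈ K) (hrs : r ≤ s) :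
    s • e - v ∈ K := by
  have := K.add_mem (K.smul_mem (sub_nonneg.2 hrs) he) hr
  rwa [sub_smul, sub_add_sub_cancel] at this

theorem nonneg_of_smul_sub_mem (hne : -e ∉ K) (hv : v ∈ K) {r : ℝ} (hr : r • e - v ∈ K) :
    0 ≤ r := by
  by_contra! hr0
  apply hne
  have := K.smul_mem (inv_nonneg.2 (neg_nonneg.2 hr0.le)) (K.add_mem hr hv)
  rwa [sub_add_cancel, smul_smul, inv_neg, neg_mul, inv_mul_cancel₀ hr0.ne, neg_smul,
    one_smul] at this

theorem scalarization_le (hne : -e ∉ K) (hv : v ∈ K) {r : ℝ} (hr : r • e - v ∈ K) :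
    scalarization K e v ≤ r :=
  csInf_le ⟨0, fun _ hs => nonneg_of_smul_sub_mem hne hv hs⟩ hr

variable [TopologicalSpace E]

theorem add_mem_interior [IsTopologicalAddGroup E] {a b : E} (ha : a ∈ interior (K : Set E))
    (hb : b ∈ K) : a + b ∈ interior (K : Set E) :=
  interior_mono (Set.add_subset_iff.2 fun _ hx _ hy => K.add_mem hx hy)
    (subset_interior_add_left (Set.add_mem_add ha hb))

theorem smul_mem_interior [ContinuousConstSMul ℝ E] {t : ℝ} (ht : 0 < t) {a : E}
    (ha : a ∈ interior (K : Set E)) : t • a ∈ interior (K : Set E) := by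
  have hsmul : t • (K : Set E) ⊆ K := Set.smul_set_subset_iff.2 fun _ hx => K.smul_mem ht.le hx
  have hta : t • a ∈ interior (t • (K : Set E)) := by
    rw [interior_smul₀ ht.ne']
    exact Set.smul_mem_smul_set ha
  exact interior_mono hsmul hta

theorem interior_eq_univ_of_neg_mem [IsTopologicalAddGroup E] [ContinuousSMul ℝ E]
    (he : e ∈ interior (K : Set E)) (hne : -e ∈ K) : interior (K : Set E) = univ := by
  have h0 : (0 : E) ∈ interior (K : Set E) := by simpa using add_mem_interior he hne
  refine eq_univ_of_forall fun v => ?_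
  obtain ⟨t, ht, htv⟩ := exists_pos_add_smul_mem (isOpen_interior.mem_nhds h0) v
  simpa [smul_smul, ht.ne'] using smul_mem_interior (inv_pos.2 ht) htv

theorem scalarization_set_nonempty [ContinuousAdd E] [ContinuousSMul ℝ E]
    (he : e ∈ interior (K : Set E)) (v : E) : {r : ℝ | r • e - v ∈ K}.Nonempty := by
  obtain ⟨t, ht, htv⟩ := exists_pos_add_smul_mem (isOpen_interior.mem_nhds he) (-v)
  refine ⟨t⁻¹, ?_⟩
  have := K.smul_mem (inv_nonneg.2 ht.le) (interior_subset htv)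
  rwa [smul_add, smul_smul, inv_mul_cancel₀ ht.ne', one_smul, ← sub_eq_add_neg] at this

theorem scalarization_nonneg [ContinuousAdd E] [ContinuousSMul ℝ E]
    (he : e ∈ interior (K : Set E)) (hne : -e ∉ K) (hv : v ∈ K) : 0 ≤ scalarization K e v :=
  le_csInf (scalarization_set_nonempty he v) fun _ hr => nonneg_of_smul_sub_mem hne hv hr

theorem smul_sub_mem_of_scalarization_lt [ContinuousAdd E] [ContinuousSMul ℝ E]
    (he : e ∈ interior (K : Set E)) {δ : ℝ} (h : scalarization K e v < δ) : δ • e - v ∈ K := by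
  obtain ⟨r, hr, hrδ⟩ := exists_lt_of_csInf_lt (scalarization_set_nonempty he v) h
  exact smul_sub_mem_of_le (interior_subset he) hr hrδ.le

theorem scalarization_of_neg_mem [IsTopologicalAddGroup E] [ContinuousSMul ℝ E]
    (he : e ∈ interior (K : Set E)) (hne : -e ∈ K) : scalarization K e v = 0 := by
  have hK : (K : Set E) = univ :=
    eq_univ_of_univ_subset (interior_eq_univ_of_neg_mem he hne ▸ interior_subset)
  simp [scalarization, ← SetLike.mem_coe, hK]

end PointedCone

open PointedCone

structure IsModularConeMetric {E X : Type*} [AddCommGroup E] [Module ℝ E] [TopologicalSpace E]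
    (K : PointedCone ℝ E) (w : E → X → X → E) : Prop where
  eq_zero_iff : ∀ x y : X, (∀ c ∈ interior (K : Set E), w c x y = 0) ↔ x = y
  symm : ∀ c ∈ interior (K : Set E), ∀ x y : X, w c x y = w c y x
  triangle : ∀ c₁ ∈ interior (K : Set E), ∀ c₂ ∈ interior (K : Set E), ∀ x y z : X,
    w c₁ x z + w c₂ z y - w (c₁ + c₂) x y ∈ K

namespace IsModularConeMetric

variable {E X : Type*} [AddCommGroup E] [Module ℝ E] [TopologicalSpace E] {K : PointedCone ℝ E}
  {w : E → X → X → E} {c d e : E} {δ : ℝ}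

theorem self_eq_zero (hw : IsModularConeMetric K w) (hc : c ∈ interior (K : Set E)) (x : X) :
    w c x x = 0 :=
  (hw.eq_zero_iff x x).2 rfl c hc

theorem mem [IsTopologicalAddGroup E] (hw : IsModularConeMetric K w)
    (hc : c ∈ interior (K : Set E)) (x y : X) : w c x y ∈ K := by
  have h2c : c + c ∈ interior (K : Set E) := add_mem_interior hc (interior_subset hc)
  have hdouble := hw.triangle c hc c hc x x y
  rw [hw.symm c hc y x, hw.self_eq_zero h2c] at hdouble
  have := K.smul_mem (by norm_num : (0 : ℝ) ≤ 1 / 2) (by simpa using hdouble)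
  rwa [← two_smul ℝ, smul_smul, one_div, inv_mul_cancel₀ two_ne_zero, one_smul] at this

theorem sub_mem_of_sub_mem_interior (hw : IsModularConeMetric K w)
    (hc : c ∈ interior (K : Set E)) (hcd : d - c ∈ interior (K : Set E)) (x y : X) :
    w c x y - w d x y ∈ K := by
  have := hw.triangle c hc (d - c) hcd x y y
  rwa [hw.self_eq_zero hcd, add_zero, add_sub_cancel] at this

theorem scalarization_le_of_smul_sub_mem [IsTopologicalAddGroup E] [ContinuousConstSMul ℝ E]
    (hw : IsModularConeMetric K w) (he : e ∈ interior (K : Set E)) (hne : -e ∉ K) {lam : ℝ}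
    (hδ : 0 < δ) (hδlam : δ < lam) {x y : X} (h : δ • e - w (δ • e) x y ∈ K) :
    scalarization K e (w (lam • e) x y) ≤ δ := by
  have hanti := hw.sub_mem_of_sub_mem_interior (smul_mem_interior hδ he)
    (by rw [← sub_smul]; exact smul_mem_interior (sub_pos.2 hδlam) he) x y
  have := K.add_mem h hanti
  rw [sub_add_sub_cancel] at this
  exact scalarization_le hne (hw.mem (smul_mem_interior (hδ.trans hδlam) he) x y) this

theorem sub_mem_interior_of_scalarization_lt [IsTopologicalAddGroup E] [ContinuousSMul ℝ E]
    (hw : IsModularConeMetric K w) (he : e ∈ interior (K : Set E)) (hδ : 0 < δ)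
    (hcδ : c - δ • e ∈ interior (K : Set E)) {x y : X}
    (h : scalarization K e (w (δ • e) x y) < δ) : c - w c x y ∈ interior (K : Set E) := by
  have hanti := hw.sub_mem_of_sub_mem_interior (smul_mem_interior hδ he) hcδ x y
  have := add_mem_interior hcδ (K.add_mem (smul_sub_mem_of_scalarization_lt he h) hanti)
  rwa [sub_add_sub_cancel, sub_add_sub_cancel] at this

end IsModularConeMetric

theorem modular_cone_cauchy_iff_scalarized_tendsto_zero_general
    {E : Type*} [AddCommGroup E] [Module ℝ E] [TopologicalSpace E]
    [IsTopologicalAddGroup E] [ContinuousSMul ℝ E]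
    (P : Set E)
    (hPadd : ∀ a ∈ P, ∀ b ∈ P, a + b ∈ P)
    (hPsmul : ∀ r : ℝ, 0 ≤ r → ∀ a ∈ P, r • a ∈ P)
    {X : Type*}
    (w : E → X → X → E)
    (hw1 : ∀ x y : X, (∀ c ∈ interior P, w c x y = 0) ↔ x = y)
    (hw2 : ∀ c ∈ interior P, ∀ x y : X, w c x y = w c y x)
    (hw3 : ∀ c₁ ∈ interior P, ∀ c₂ ∈ interior P, ∀ x y z : X,
      w c₁ x z + w c₂ z y - w (c₁ + c₂) x y ∈ P)
    (e : E) (he : e ∈ interior P)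
    (W : ℝ → X → X → ℝ)
    (hW : ∀ lam : ℝ, 0 < lam → ∀ x y : X,
      W lam x y = sInf {r : ℝ | r • e - w (lam • e) x y ∈ P})
    (u : ℕ → X) :
    (∀ c ∈ interior P, ∃ N : ℕ, ∀ n > N, ∀ m > N,
      c - w c (u n) (u m) ∈ interior P) ↔
    (∀ lam : ℝ, 0 < lam →
      Filter.Tendsto (fun p : ℕ × ℕ => W lam (u p.1) (u p.2))
        Filter.atTop (nhds 0)) := by
  obtain ⟨K, rfl⟩ : ∃ K : PointedCone ℝ E, (K : Set E) = P :=
    ⟨{ carrier := P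
       add_mem' := fun ha hb => hPadd _ ha _ hb
       zero_mem' := by simpa using hPsmul 0 le_rfl e (interior_subset he)
       smul_mem' := fun c _ hx => hPsmul c c.2 _ hx }, rfl⟩
  have hw : IsModularConeMetric K w := ⟨hw1, hw2, hw3⟩
  have hWK : ∀ lam, 0 < lam → ∀ x y, W lam x y = scalarization K e (w (lam • e) x y) := hW
  by_cases hne : -e ∈ K
  · refine iff_of_true (fun c _ => ⟨0, fun _ _ _ _ => ?_⟩) fun lam hlam => ?_
    · exact (interior_eq_univ_of_neg_mem he hne).symm ▸ mem_univ _
    · simp [hWK lam hlam, scalarization_of_neg_mem he hne]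
  constructor
  · intro hcauchy lam hlam
    refine tendsto_order.2 ⟨fun a ha => Eventually.of_forall fun p => ?_, fun a ha => ?_⟩
    · rw [hWK lam hlam]
      exact ha.trans_le (scalarization_nonneg he hne (hw.mem (smul_mem_interior hlam he) _ _))
    · obtain ⟨δ, hδ, hδlt⟩ := exists_between (lt_min hlam ha)
      obtain ⟨N, hN⟩ := hcauchy (δ • e) (smul_mem_interior hδ he)
      filter_upwards [eventually_ge_atTop (N + 1, N + 1)] with p hp
      rw [hWK lam hlam]
      exact (hw.scalarization_le_of_smul_sub_mem he hne hδ (lt_min_iff.1 hδlt).1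
        (interior_subset (hN _ hp.1 _ hp.2))).trans_lt (lt_min_iff.1 hδlt).2
  · intro hlim c hc
    obtain ⟨δ, hδ, hcδ⟩ := exists_pos_add_smul_mem (isOpen_interior.mem_nhds hc) (-e)
    rw [smul_neg, ← sub_eq_add_neg] at hcδ
    obtain ⟨⟨N, M⟩, hNM⟩ := eventually_atTop.1 ((hlim δ hδ).eventually (gt_mem_nhds hδ))
    refine ⟨max N M, fun n hn m hm => hw.sub_mem_interior_of_scalarization_lt he hδ hcδ ?_⟩
    rw [← hWK δ hδ]
    exact hNM (n, m) ⟨(le_max_left N M).trans hn.le, (le_max_right N M).trans hm.le⟩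

/-- Let `w` be a modular cone metric on `X`, `e ∈ interior P`, and let
`W^e_λ(x,y) = ξ_e(w (λ • e) x y)` with `ξ_e(v) = inf {r : ℝ | r • e - v ∈ P}`.
A sequence `{xₙ}` in `X` is modular cone Cauchy (for every `c ≫ θ` there is `N`
with `w c xₙ xₘ ≪ c` for all `m, n > N`) if and only if for every `λ > 0`,
`W^e_λ(xₙ, xₘ) → 0` as `n, m → ∞`. -/
theorem modular_cone_cauchy_iff_scalarized_tendsto_zero
    {E : Type*} [AddCommGroup E] [Module ℝ E] [TopologicalSpace E]
    [IsTopologicalAddGroup E] [ContinuousSMul ℝ E]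
    [LocallyConvexSpace ℝ E] [T2Space E]
    (P : Set E) (hPclosed : IsClosed P) (hPconv : Convex ℝ P)
    (hPadd : ∀ a ∈ P, ∀ b ∈ P, a + b ∈ P)
    (hPsmul : ∀ r : ℝ, 0 ≤ r → ∀ a ∈ P, r • a ∈ P)
    (hPpointed : P ∩ (-P) = {0})
    (hPint : (interior P).Nonempty)
    {X : Type*} [Nonempty X]
    (w : E → X → X → E)
    (hw1 : ∀ x y : X, (∀ c ∈ interior P, w c x y = 0) ↔ x = y)
    (hw2 : ∀ c ∈ interior P, ∀ x y : X, w c x y = w c y x)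
    (hw3 : ∀ c₁ ∈ interior P, ∀ c₂ ∈ interior P, ∀ x y z : X,
      w c₁ x z + w c₂ z y - w (c₁ + c₂) x y ∈ P)
    (e : E) (he : e ∈ interior P)
    (W : ℝ → X → X → ℝ)
    (hW : ∀ lam : ℝ, 0 < lam → ∀ x y : X,
      W lam x y = sInf {r : ℝ | r • e - w (lam • e) x y ∈ P})
    (u : ℕ → X) :
    (∀ c ∈ interior P, ∃ N : ℕ, ∀ n > N, ∀ m > N,
      c - w c (u n) (u m) ∈ interior P) ↔
    (∀ lam : ℝ, 0 < lam →
      Filter.Tendsto (fun p : ℕ × ℕ => W lam (u p.1) (u p.2))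
        Filter.atTop (nhds 0)) :=
  modular_cone_cauchy_iff_scalarized_tendsto_zero_general P hPadd hPsmul w hw1 hw2 hw3 e he W hW u
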